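/- arXiv:1012.4147 — 4 statements merged into one kernel-verified Lean document; each statement's English description precedes it below -/
import Mathlib

section
/- Let C = [0,∞)^n with the Euclidean metric and let X ⊆ C be a union of coordinate faces of C, equipped with its induced path (length) metric d_X. Then for all p, q ∈ X, d_C(p,q) ≤ d_X(p,q) ≤ √2 · d_C(p,q). -/
/-!
The lower bound holds for every path, its length dominating the distance of its endpoints.
For the upper bound, let `r` be the coordinatewise minimum of `p` and `q`. The support of `r` lies
in the supports of both `p` and `q`, so the segments `[p, r]` and `[r, q]` stay inside the faces
containing `p` and `q`. In every coordinate one of `p - r` and `r - q` vanishes, so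
`|p - r|² + |r - q|² = |p - q|²`, and the broken line `p → r → q` has length
`|p - r| + |r - q| ≤ √2 · |p - q|`.
-/

/-- The intrinsic path (length) pseudo-distance on a subset `X` of a normed space:
the infimum of lengths (total variations) of continuous paths inside `X`. -/
noncomputable def pathDist {E : Type*} [NormedAddCommGroup E] (X : Set E) (p q : E) : ENNReal :=
  sInf {L | ∃ γ : ℝ → E, ContinuousOn γ (Set.Icc 0 1) ∧ (∀ t ∈ Set.Icc (0 : ℝ) 1, γ t ∈ X) ∧
    γ 0 = p ∧ γ 1 = q ∧ L = eVariationOn γ (Set.Icc 0 1)}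

open Set AffineMap

section PathDist

variable {E : Type*} [NormedAddCommGroup E]

theorem edist_le_pathDist (X : Set E) (p q : E) : edist p q ≤ pathDist X p q := by
  refine le_sInf ?_
  rintro L ⟨γ, -, -, rfl, rfl, rfl⟩
  exact eVariationOn.edist_le γ (left_mem_Icc.2 zero_le_one) (right_mem_Icc.2 zero_le_one)

variable [NormedSpace ℝ E]

theorem eVariationOn_lineMap_Icc_zero_one (p q : E) :
    eVariationOn (lineMap p q : ℝ → E) (Icc 0 1) = edist p q := by
  refine le_antisymm ?_ ?_
  · have h := (lipschitzWith_lineMap p q).lipschitzOnWith.comp_eVariationOn_le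
      (mapsTo_id (Icc (0 : ℝ) 1))
    rwa [eVariationOn_id_Icc, sub_zero, ENNReal.ofReal_one, mul_one, ← edist_nndist] at h
  · simpa using eVariationOn.edist_le (lineMap p q : ℝ → E)
      (left_mem_Icc.2 zero_le_one) (right_mem_Icc.2 zero_le_one)

noncomputable def brokenLine (p r q : E) (t : ℝ) : E :=
  if t ≤ 1 / 2 then lineMap p r (2 * t) else lineMap r q (2 * t - 1)

variable (p r q : E)

theorem continuous_brokenLine : Continuous (brokenLine p r q) := by
  refine Continuous.if_le (by fun_prop) (by fun_prop) continuous_id continuous_const ?_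
  rintro t rfl
  norm_num

theorem brokenLine_eqOn_Iic : EqOn (brokenLine p r q) (lineMap p r ∘ (2 * ·)) (Iic (1 / 2)) :=
  fun t (ht : t ≤ 1 / 2) => if_pos ht

theorem brokenLine_eqOn_Ici :
    EqOn (brokenLine p r q) (lineMap r q ∘ (2 * · - 1)) (Ici (1 / 2)) := by
  intro t (ht : 1 / 2 ≤ t)
  rcases ht.eq_or_lt with rfl | ht
  · norm_num [brokenLine]
  · exact if_neg (not_le.2 ht)

theorem brokenLine_mem_segment_union {t : ℝ} (ht : t ∈ Icc 0 1) :
    brokenLine p r q t ∈ segment ℝ p r ∪ segment ℝ r q := by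
  rcases le_total t (1 / 2) with h | h
  · rw [brokenLine_eqOn_Iic p r q h]
    exact .inl (lineMap_mem_segment ℝ p r ⟨by linarith [ht.1], by linarith⟩)
  · rw [brokenLine_eqOn_Ici p r q h]
    exact .inr (lineMap_mem_segment ℝ r q ⟨by linarith, by linarith [ht.2]⟩)

theorem eVariationOn_brokenLine_le :
    eVariationOn (brokenLine p r q) (Icc 0 1) ≤ edist p r + edist r q := by
  have hsplit := eVariationOn.Icc_add_Icc (brokenLine p r q) (s := univ)
    (by norm_num : (0 : ℝ) ≤ 1 / 2) (by norm_num : (1 / 2 : ℝ) ≤ 1) (mem_univ _)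
  simp only [univ_inter] at hsplit
  rw [← hsplit,
    eVariationOn.congr ((brokenLine_eqOn_Iic p r q).mono Icc_subset_Iic_self),
    eVariationOn.congr ((brokenLine_eqOn_Ici p r q).mono Icc_subset_Ici_self),
    ← eVariationOn_lineMap_Icc_zero_one p r, ← eVariationOn_lineMap_Icc_zero_one r q]
  gcongr
  · refine eVariationOn.comp_le_of_monotoneOn _ _ (fun x _ y _ h => by linarith) ?_
    exact fun t ht => ⟨by linarith [ht.1], by linarith [ht.2]⟩
  · refine eVariationOn.comp_le_of_monotoneOn _ _ (fun x _ y _ h => by linarith) ?_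
    exact fun t ht => ⟨by linarith [ht.1], by linarith [ht.2]⟩

theorem pathDist_le_edist_add_edist {X : Set E} {p r q : E} (hpr : segment ℝ p r ⊆ X)
    (hrq : segment ℝ r q ⊆ X) : pathDist X p q ≤ edist p r + edist r q := by
  refine sInf_le_of_le ⟨brokenLine p r q, (continuous_brokenLine p r q).continuousOn,
    fun t ht => union_subset hpr hrq (brokenLine_mem_segment_union p r q ht), ?_, ?_, rfl⟩
    (eVariationOn_brokenLine_le p r q)
  · norm_num [brokenLine]
  · norm_num [brokenLine]

end PathDist

section CoordinateFaces

variable {ι : Type*}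

def coordFaceUnion (F : Finset (Finset ι)) : Set (EuclideanSpace ℝ ι) :=
  {x | (∀ i, 0 ≤ x i) ∧ ∃ S ∈ F, ∀ i, x i ≠ 0 → i ∈ S}

def coordInf (p q : EuclideanSpace ℝ ι) : EuclideanSpace ℝ ι :=
  WithLp.toLp 2 fun i => min (p i) (q i)

theorem coordInf_comm (p q : EuclideanSpace ℝ ι) : coordInf p q = coordInf q p := by
  simp only [coordInf, min_comm]

theorem segment_subset_coordFaceUnion {F : Finset (Finset ι)} {p r : EuclideanSpace ℝ ι}
    (hp : p ∈ coordFaceUnion F) (hr : ∀ i, 0 ≤ r i) (hrp : ∀ i, r i ≠ 0 → p i ≠ 0) :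
    segment ℝ p r ⊆ coordFaceUnion F := by
  obtain ⟨hp0, S, hS, hpS⟩ := hp
  rintro _ ⟨a, b, ha, hb, -, rfl⟩
  refine ⟨fun i => ?_, S, hS, fun i hi => hpS i ?_⟩
  · simp only [PiLp.add_apply, PiLp.smul_apply, smul_eq_mul]
    have := hp0 i
    have := hr i
    positivity
  · intro hpi
    have hri : r i = 0 := by_contra fun h => hrp i h hpi
    simp [hpi, hri] at hi

theorem segment_coordInf_subset_coordFaceUnion {F : Finset (Finset ι)} {p q : EuclideanSpace ℝ ι}
    (hp : p ∈ coordFaceUnion F) (hq : ∀ i, 0 ≤ q i) :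
    segment ℝ p (coordInf p q) ⊆ coordFaceUnion F := by
  refine segment_subset_coordFaceUnion hp (fun i => le_min (hp.1 i) (hq i)) fun i h hpi => h ?_
  simp [coordInf, hpi, hq i]

variable [Fintype ι]

theorem dist_coordInf_sq_add_dist_coordInf_sq (p q : EuclideanSpace ℝ ι) :
    dist p (coordInf p q) ^ 2 + dist (coordInf p q) q ^ 2 = dist p q ^ 2 := by
  simp only [EuclideanSpace.dist_eq, Real.sq_sqrt (Finset.sum_nonneg fun _ _ => sq_nonneg _),
    ← Finset.sum_add_distrib, coordInf, Real.dist_eq, sq_abs]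
  refine Finset.sum_congr rfl fun i _ => ?_
  rcases le_total (p i) (q i) with h | h
  · simp [min_eq_left h]
  · simp [min_eq_right h]

theorem add_le_sqrt_two_mul_sqrt_sq_add_sq (a b : ℝ) : a + b ≤ √2 * √(a ^ 2 + b ^ 2) := by
  rw [← Real.sqrt_mul zero_le_two]
  calc a + b ≤ |a + b| := le_abs_self _
    _ = √((a + b) ^ 2) := (Real.sqrt_sq_eq_abs _).symm
    _ ≤ √(2 * (a ^ 2 + b ^ 2)) := Real.sqrt_le_sqrt (by nlinarith [sq_nonneg (a - b)])

theorem dist_coordInf_add_dist_coordInf_le (p q : EuclideanSpace ℝ ι) :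
    dist p (coordInf p q) + dist (coordInf p q) q ≤ √2 * dist p q := by
  simpa [dist_coordInf_sq_add_dist_coordInf_sq, Real.sqrt_sq dist_nonneg] using
    add_le_sqrt_two_mul_sqrt_sq_add_sq (dist p (coordInf p q)) (dist (coordInf p q) q)

end CoordinateFaces

theorem cube_lemma_general (n : ℕ) (F : Finset (Finset (Fin n)))
    (X : Set (EuclideanSpace ℝ (Fin n)))
    (hX : X = {x | (∀ i, 0 ≤ x i) ∧ ∃ S ∈ F, ∀ i, x i ≠ 0 → i ∈ S})
    (p q : EuclideanSpace ℝ (Fin n)) (hp : p ∈ X) (hq : q ∈ X) :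
    ENNReal.ofReal (dist p q) ≤ pathDist X p q ∧
      pathDist X p q ≤ ENNReal.ofReal (Real.sqrt 2 * dist p q) := by
  change X = coordFaceUnion F at hX
  subst hX
  refine ⟨edist_dist p q ▸ edist_le_pathDist _ p q, ?_⟩
  have hpr := segment_coordInf_subset_coordFaceUnion hp hq.1
  have hrq := segment_coordInf_subset_coordFaceUnion hq hp.1
  rw [coordInf_comm, segment_symm] at hrq
  calc pathDist _ p q ≤ edist p (coordInf p q) + edist (coordInf p q) q :=
        pathDist_le_edist_add_edist hpr hrq
    _ = ENNReal.ofReal (dist p (coordInf p q) + dist (coordInf p q) q) := by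
        rw [edist_dist, edist_dist, ENNReal.ofReal_add dist_nonneg dist_nonneg]
    _ ≤ ENNReal.ofReal (√2 * dist p q) :=
        ENNReal.ofReal_le_ofReal (dist_coordInf_add_dist_coordInf_le p q)

/-- cube lemma: if `X ⊆ [0,∞)^n` is a union of coordinate faces
(closed under sub-faces) then the intrinsic path metric `d_X` on `X` satisfies
`d_C(p,q) ≤ d_X(p,q) ≤ √2 · d_C(p,q)` for the Euclidean metric `d_C`. -/
theorem cube_lemma (n : ℕ) (F : Finset (Finset (Fin n)))
    (hsub : ∀ S ∈ F, ∀ T ⊆ S, T ∈ F)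
    (X : Set (EuclideanSpace ℝ (Fin n)))
    (hX : X = {x | (∀ i, 0 ≤ x i) ∧ ∃ S ∈ F, ∀ i, x i ≠ 0 → i ∈ S})
    (p q : EuclideanSpace ℝ (Fin n)) (hp : p ∈ X) (hq : q ∈ X) :
    ENNReal.ofReal (dist p q) ≤ pathDist X p q ∧
      pathDist X p q ≤ ENNReal.ofReal (Real.sqrt 2 * dist p q) :=
  cube_lemma_general n F X hX p q hp hq
end

section
/- Let C = [0,∞)^n with the Euclidean metric, let P, Q be coordinate faces of C with R = P ∩ Q, and let p ∈ P, q ∈ Q with projections p', q' ∈ R. Then the concatenated path [p,p'] ∪ [p',q'] ∪ [q',q], which lies in P ∪ Q, has length d_C(p,p') + d_C(p',q') + d_C(q',q), and satisfies (d_C(p,p') + d_C(q',q))² + d_C(p',q')² ≤ 2·d_C(p,q)². -/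
/-!
The faces are convex and the projections `p'`, `q'` lie in `R ⊆ P ∩ Q`, so the three segments
stay in `P ∪ Q`, and the polygonal path running along them has their total length.
The displacements `p - p'`, `p' - q'`, `q' - q` have pairwise disjoint coordinate supports
(`SP \ R`, `R`, `SQ \ R`), so Pythagoras gives `d(p,p')² + d(p',q')² + d(q',q)² = d(p,q)²`,
and the inequality follows from `(a + c)² ≤ 2 (a² + c²)`.
-/

open Set AffineMap

section ThreeSegmentPath

variable {E : Type*} [NormedAddCommGroup E] [NormedSpace ℝ E]

theorem eVariationOn_lineMap_comp (x y : E) {f : ℝ → ℝ} {a b : ℝ} (hab : a ≤ b)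
    (hf : MonotoneOn f (Icc a b)) (ha : f a = 0) (hb : f b = 1) :
    eVariationOn (fun t => lineMap x y (f t)) (Icc a b) = edist x y := by
  have ha' := left_mem_Icc.2 hab
  have hb' := right_mem_Icc.2 hab
  apply le_antisymm
  · have hvar := hf.eVariationOn_eq ha' hb'
    rw [inter_self, ha, hb, sub_zero, ENNReal.ofReal_one] at hvar
    calc eVariationOn (lineMap x y ∘ f) (Icc a b)
        ≤ nndist x y * eVariationOn f (Icc a b) :=
          (lipschitzWith_lineMap x y).lipschitzOnWith.comp_eVariationOn_le (mapsTo_univ _ _)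
      _ = edist x y := by rw [hvar, mul_one, edist_nndist]
  · simpa [ha, hb] using eVariationOn.edist_le (fun t => lineMap x y (f t) : ℝ → E) ha' hb'

noncomputable def threeSegmentPath (x y z w : E) (t : ℝ) : E :=
  if t ≤ 1 / 3 then lineMap x y (3 * t)
  else if t ≤ 2 / 3 then lineMap y z (3 * t - 1)
  else lineMap z w (3 * t - 2)

variable (x y z w : E)

theorem continuous_threeSegmentPath : Continuous (threeSegmentPath x y z w) := by
  refine Continuous.if_le (by fun_prop) (Continuous.if_le ?_ ?_ ?_ ?_ ?_) ?_ ?_ ?_ <;>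
    first | fun_prop | (intro t ht; subst ht; norm_num)

theorem threeSegmentPath_zero : threeSegmentPath x y z w 0 = x := by
  simp [threeSegmentPath]

theorem threeSegmentPath_one : threeSegmentPath x y z w 1 = w := by
  norm_num [threeSegmentPath]

theorem threeSegmentPath_eqOn_first :
    EqOn (threeSegmentPath x y z w) (fun t => lineMap x y (3 * t)) (Icc 0 (1 / 3)) :=
  fun _ ht => if_pos ht.2

theorem threeSegmentPath_eqOn_second :
    EqOn (threeSegmentPath x y z w) (fun t => lineMap y z (3 * t - 1)) (Icc (1 / 3) (2 / 3)) := by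
  rintro t ⟨h1, h2⟩
  rcases h1.eq_or_lt with rfl | h1
  · norm_num [threeSegmentPath]
  · rw [threeSegmentPath, if_neg h1.not_ge, if_pos h2]

theorem threeSegmentPath_eqOn_third :
    EqOn (threeSegmentPath x y z w) (fun t => lineMap z w (3 * t - 2)) (Icc (2 / 3) 1) := by
  rintro t ⟨h1, -⟩
  rcases h1.eq_or_lt with rfl | h1
  · norm_num [threeSegmentPath]
  · rw [threeSegmentPath, if_neg (by linarith), if_neg h1.not_ge]

theorem threeSegmentPath_mem {t : ℝ} (ht : t ∈ Icc (0 : ℝ) 1) :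
    threeSegmentPath x y z w t ∈ segment ℝ x y ∪ segment ℝ y z ∪ segment ℝ z w := by
  obtain ⟨h0, h1⟩ := ht
  by_cases h13 : t ≤ 1 / 3
  · rw [threeSegmentPath_eqOn_first x y z w ⟨h0, h13⟩]
    exact Or.inl (Or.inl (lineMap_mem_segment ℝ _ _ ⟨by linarith, by linarith⟩))
  by_cases h23 : t ≤ 2 / 3
  · rw [threeSegmentPath_eqOn_second x y z w ⟨by linarith, h23⟩]
    exact Or.inl (Or.inr (lineMap_mem_segment ℝ _ _ ⟨by linarith, by linarith⟩))
  · rw [threeSegmentPath_eqOn_third x y z w ⟨by linarith, h1⟩]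
    exact Or.inr (lineMap_mem_segment ℝ _ _ ⟨by linarith, by linarith⟩)

theorem eVariationOn_threeSegmentPath :
    eVariationOn (threeSegmentPath x y z w) (Icc 0 1) = edist x y + edist y z + edist z w := by
  have split (a b c : ℝ) (hab : a ≤ b) (hbc : b ≤ c) :
      eVariationOn (threeSegmentPath x y z w) (Icc a b) +
        eVariationOn (threeSegmentPath x y z w) (Icc b c) =
      eVariationOn (threeSegmentPath x y z w) (Icc a c) := by
    simpa using eVariationOn.Icc_add_Icc (threeSegmentPath x y z w) hab hbc (mem_univ b)
  have affine_mono (c : ℝ) (s : Set ℝ) : MonotoneOn (fun t : ℝ => 3 * t - c) s :=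
    fun _ _ _ _ h => by linarith
  rw [← split 0 (2 / 3) 1 (by norm_num) (by norm_num),
    ← split 0 (1 / 3) (2 / 3) (by norm_num) (by norm_num),
    eVariationOn.eq_of_eqOn (threeSegmentPath_eqOn_first x y z w),
    eVariationOn.eq_of_eqOn (threeSegmentPath_eqOn_second x y z w),
    eVariationOn.eq_of_eqOn (threeSegmentPath_eqOn_third x y z w),
    eVariationOn_lineMap_comp x y (by norm_num) (by simpa using affine_mono 0 _)
      (by norm_num) (by norm_num),
    eVariationOn_lineMap_comp y z (by norm_num) (affine_mono 1 _) (by norm_num) (by norm_num),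
    eVariationOn_lineMap_comp z w (by norm_num) (affine_mono 2 _) (by norm_num) (by norm_num)]

end ThreeSegmentPath

section CoordFace

variable {ι : Type*}

/-- The face of the orthant `[0, ∞)^ι` consisting of the points supported on `S`. -/
def coordFace (S : Finset ι) : Set (EuclideanSpace ℝ ι) :=
  {x | (∀ i, 0 ≤ x i) ∧ ∀ i, x i ≠ 0 → i ∈ S}

theorem convex_coordFace (S : Finset ι) : Convex ℝ (coordFace S) := by
  rintro x ⟨hx0, hxS⟩ y ⟨hy0, hyS⟩ a b ha hb -
  refine ⟨fun i => ?_, fun i hi => ?_⟩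
  · simpa using add_nonneg (mul_nonneg ha (hx0 i)) (mul_nonneg hb (hy0 i))
  · by_contra hiS
    have hxi : x i = 0 := not_imp_comm.1 (hxS i) hiS
    have hyi : y i = 0 := not_imp_comm.1 (hyS i) hiS
    simp [hxi, hyi] at hi

theorem coordFace_mono {S T : Finset ι} (h : S ⊆ T) : coordFace S ⊆ coordFace T :=
  fun _ hx => ⟨hx.1, fun i hi => h (hx.2 i hi)⟩

theorem mem_coordFace_of_eq_ite [DecidableEq ι] {S : Finset ι} {x x' : EuclideanSpace ℝ ι}
    (hx : ∀ i, 0 ≤ x i) (hx' : ∀ i, x' i = if i ∈ S then x i else 0) : x' ∈ coordFace S := by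
  refine ⟨fun i => ?_, fun i hi => ?_⟩ <;> rw [hx' i] at *
  · split_ifs
    exacts [hx i, le_rfl]
  · by_contra hiS
    exact hi (if_neg hiS)

theorem eq_zero_or_eq_zero_of_mem_coordFace [DecidableEq ι] {S T : Finset ι}
    {x y : EuclideanSpace ℝ ι} (hx : x ∈ coordFace S) (hy : y ∈ coordFace T) {i : ι}
    (hi : i ∉ S ∩ T) : x i = 0 ∨ y i = 0 := by
  by_contra! h
  exact hi (Finset.mem_inter.2 ⟨hx.2 i h.1, hy.2 i h.2⟩)

/-- On `S` only the middle term survives; off `S` the cross term `p i * q i` vanishes. -/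
theorem dist_sq_add_dist_sq_add_dist_sq_of_eq_ite [Fintype ι] [DecidableEq ι] {S : Finset ι}
    {p q p' q' : EuclideanSpace ℝ ι} (hpq : ∀ i ∉ S, p i = 0 ∨ q i = 0)
    (hp' : ∀ i, p' i = if i ∈ S then p i else 0) (hq' : ∀ i, q' i = if i ∈ S then q i else 0) :
    dist p p' ^ 2 + dist p' q' ^ 2 + dist q' q ^ 2 = dist p q ^ 2 := by
  simp only [EuclideanSpace.dist_eq, Real.sq_sqrt (Finset.sum_nonneg fun _ _ => sq_nonneg _),
    Real.dist_eq, sq_abs, ← Finset.sum_add_distrib]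
  refine Finset.sum_congr rfl fun i _ => ?_
  rw [hp' i, hq' i]
  split_ifs with hi
  · ring
  · rcases hpq i hi with h | h <;> simp [h]

end CoordFace

/-- the concatenated piecewise-linear path `[p,p'] ∪ [p',q'] ∪ [q',q]`
lies in `P ∪ Q`, has length `d(p,p') + d(p',q') + d(q',q)`, and
`(d(p,p') + d(q',q))² + d(p',q')² ≤ 2·d(p,q)²`. -/
theorem cube_lemma_path (n : ℕ) (SP SQ : Finset (Fin n))
    (P Q : Set (EuclideanSpace ℝ (Fin n)))
    (hP : P = {x | (∀ i, 0 ≤ x i) ∧ ∀ i, x i ≠ 0 → i ∈ SP})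
    (hQ : Q = {x | (∀ i, 0 ≤ x i) ∧ ∀ i, x i ≠ 0 → i ∈ SQ})
    (p q p' q' : EuclideanSpace ℝ (Fin n)) (hp : p ∈ P) (hq : q ∈ Q)
    (hp' : ∀ i, p' i = if i ∈ SP ∩ SQ then p i else 0)
    (hq' : ∀ i, q' i = if i ∈ SP ∩ SQ then q i else 0) :
    (segment ℝ p p' ∪ segment ℝ p' q' ⊆ P) ∧ segment ℝ q' q ⊆ Q ∧
    (∃ γ : ℝ → EuclideanSpace ℝ (Fin n), ContinuousOn γ (Set.Icc 0 1) ∧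
      γ 0 = p ∧ γ 1 = q ∧ (∀ t ∈ Set.Icc (0 : ℝ) 1, γ t ∈ P ∪ Q) ∧
      eVariationOn γ (Set.Icc 0 1) =
        ENNReal.ofReal (dist p p' + dist p' q' + dist q' q)) ∧
    (dist p p' + dist q' q) ^ 2 + dist p' q' ^ 2 ≤ 2 * dist p q ^ 2 := by
  obtain rfl : P = coordFace SP := hP
  obtain rfl : Q = coordFace SQ := hQ
  have hp'R := mem_coordFace_of_eq_ite hp.1 hp'
  have hq'R := mem_coordFace_of_eq_ite hq.1 hq'
  have hPconv := convex_coordFace SP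
  have hsubP : segment ℝ p p' ∪ segment ℝ p' q' ⊆ coordFace SP :=
    union_subset (hPconv.segment_subset hp (coordFace_mono Finset.inter_subset_left hp'R))
      (hPconv.segment_subset (coordFace_mono Finset.inter_subset_left hp'R)
        (coordFace_mono Finset.inter_subset_left hq'R))
  have hsubQ : segment ℝ q' q ⊆ coordFace SQ :=
    (convex_coordFace SQ).segment_subset (coordFace_mono Finset.inter_subset_right hq'R) hq
  have hpyth := dist_sq_add_dist_sq_add_dist_sq_of_eq_ite
    (fun i hi => eq_zero_or_eq_zero_of_mem_coordFace hp hq hi) hp' hq'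
  refine ⟨hsubP, hsubQ, ⟨threeSegmentPath p p' q' q,
    (continuous_threeSegmentPath p p' q' q).continuousOn, threeSegmentPath_zero p p' q' q,
    threeSegmentPath_one p p' q' q, fun t ht => ?_, ?_⟩, ?_⟩
  · rcases threeSegmentPath_mem p p' q' q ht with h | h
    exacts [Or.inl (hsubP h), Or.inr (hsubQ h)]
  · rw [eVariationOn_threeSegmentPath, edist_dist, edist_dist, edist_dist,
      ENNReal.ofReal_add (by positivity) dist_nonneg, ENNReal.ofReal_add dist_nonneg dist_nonneg]
  · linarith [add_sq_le (a := dist p p') (b := dist q' q), sq_nonneg (dist p' q')]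
end

section
/- Let {G_n = (V_n, E_n)} be a sequence of finite connected graphs with |V_n| → ∞, all vertex degrees between 1 and d, and suppose there exist maps f_n : V_n → Y into a metric space Y and unbounded non-decreasing functions ρ₁, ρ₂ : [0,∞) → [0,∞) with ρ₁(d_{G_n}(x,x')) ≤ d_Y(f_n(x), f_n(x')) ≤ ρ₂(d_{G_n}(x,x')) for all n and all x,x' ∈ V_n. Assume further that for each n there is a point ȳ_n ∈ Y (a barycenter) such that ∑_{v∈V_n} deg(v)·d_Y(f_n(v), ȳ_n)² ≤ (1/λ₁(G_n,Y))·∑_{{v,w}∈E_n} d_Y(f_n(v),f_n(w))² whenever λ₁(G_n,Y) > 0. Then liminf_{n→∞} λ₁(G_n, Y) = 0. -/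
/-!
If `λ₁(G_n, Y) ≥ c > 0`, the barycenter inequality together with the bound `ρ₂ 1` on the images
of edges gives `∑ᵥ d(f v, ȳ)² ≤ |V| d ρ₂(1)² / (2c)`, so by Markov's inequality at least half of
the vertices map into a ball around `ȳ` of radius independent of `n`. The lower control `ρ₁` pulls
this ball back into a graph ball of bounded radius, which has at most `(d + 1) ^ k` vertices; this
contradicts `|V_n| → ∞`.
-/

open Finset Filter

namespace SimpleGraph

variable {V : Type*} {G : SimpleGraph V}

lemma Connected.exists_dist_le_dist_sub_one (hconn : G.Connected) (u v : V) :
    ∃ w, G.dist u w ≤ G.dist u v - 1 ∧ (w = v ∨ G.Adj w v) := by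
  obtain ⟨p, hp⟩ := hconn.exists_walk_length_eq_dist u v
  refine ⟨p.penultimate, hp ▸ p.length_dropLast ▸ G.dist_le p.dropLast, ?_⟩
  by_cases hnil : p.Nil
  · exact .inl (by cases p <;> simp_all)
  · exact .inr (p.adj_penultimate hnil)

variable [Fintype V] [DecidableRel G.Adj]

lemma Connected.card_filter_dist_le_le_pow (hconn : G.Connected) {d : ℕ}
    (hdeg : ∀ v, G.degree v ≤ d) (u : V) (k : ℕ) :
    #{v | G.dist u v ≤ k} ≤ (d + 1) ^ k := by
  classical
  induction k with
  | zero =>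
    have : ({v | G.dist u v ≤ 0} : Finset V) ⊆ {u} := fun v hv => by
      simpa [hconn.dist_eq_zero_iff, eq_comm] using hv
    simpa using card_le_card this
  | succ k ih =>
    have hcover : ({v | G.dist u v ≤ k + 1} : Finset V) ⊆
        ({w | G.dist u w ≤ k} : Finset V).biUnion fun w => insert w (G.neighborFinset w) := by
      intro v hv
      obtain ⟨w, hw, hwv⟩ := hconn.exists_dist_le_dist_sub_one u v
      simp only [mem_filter, mem_univ, true_and] at hv
      simp only [mem_biUnion, mem_filter, mem_univ, true_and, mem_insert, mem_neighborFinset]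
      exact ⟨w, by omega, hwv.imp Eq.symm id⟩
    calc #{v | G.dist u v ≤ k + 1}
        ≤ #{w | G.dist u w ≤ k} * (d + 1) :=
          (card_le_card hcover).trans <| card_biUnion_le_card_mul _ _ _ fun w _ =>
            (card_insert_le _ _).trans (by simpa using hdeg w)
      _ ≤ (d + 1) ^ (k + 1) := by rw [pow_succ]; gcongr

end SimpleGraph

lemma card_le_two_mul_card_filter_le {ι : Type*} [Fintype ι] {g : ι → ℝ} (hg : ∀ i, 0 ≤ g i)
    {a : ℝ} (ha : 0 < a) (hsum : 2 * ∑ i, g i ≤ Fintype.card ι * a) :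
    Fintype.card ι ≤ 2 * #{i | g i ≤ a} := by
  have hmarkov : #{i | ¬g i ≤ a} * a ≤ ∑ i, g i := by
    rw [← nsmul_eq_mul]
    refine (card_nsmul_le_sum _ _ _ fun i hi => ?_).trans
      (sum_le_sum_of_subset_of_nonneg (filter_subset _ _) fun i _ _ => hg i)
    exact (not_le.1 (mem_filter.1 hi).2).le
  have hsplit := card_filter_add_card_filter_not (s := univ) (fun i => g i ≤ a)
  rw [card_univ] at hsplit
  have : (Fintype.card ι : ℝ) ≤ 2 * #{i | g i ≤ a} := by
    rw [← hsplit] at hsum ⊢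
    push_cast at hsum ⊢
    nlinarith
  exact_mod_cast this

section CoarseEmbedding

variable {V Y : Type*} [Fintype V] [PseudoMetricSpace Y] (G : SimpleGraph V) [DecidableRel G.Adj]
  {d : ℕ} (φ : V → Y)

lemma sum_adj_dist_sq_le (hdeg : ∀ v, G.degree v ≤ d) {C : ℝ}
    (hC : ∀ u v, G.Adj u v → dist (φ u) (φ v) ≤ C) :
    ∑ u, ∑ v, (if G.Adj u v then dist (φ u) (φ v) ^ 2 else 0) ≤ Fintype.card V * (d * C ^ 2) := by
  rw [← nsmul_eq_mul, ← card_univ]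
  refine sum_le_card_nsmul _ _ _ fun u _ => ?_
  rw [← sum_filter, ← G.neighborFinset_eq_filter]
  calc ∑ v ∈ G.neighborFinset u, dist (φ u) (φ v) ^ 2
      ≤ #(G.neighborFinset u) • C ^ 2 := sum_le_card_nsmul _ _ _ fun v hv =>
        pow_le_pow_left₀ dist_nonneg (hC u v ((G.mem_neighborFinset u v).1 hv)) 2
    _ ≤ d * C ^ 2 := by
        rw [nsmul_eq_mul, G.card_neighborFinset_eq_degree]
        gcongr
        exact_mod_cast hdeg u

lemma two_mul_sum_dist_sq_le_of_barycenter (hdeg : ∀ v, G.degree v ≤ d)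
    (hdeg1 : ∀ v, 1 ≤ G.degree v) {C : ℝ} (hC : ∀ u v, G.Adj u v → dist (φ u) (φ v) ≤ C)
    {lam : ℝ} (hlam : 0 < lam) {y : Y}
    (hy : ∑ v, (G.degree v : ℝ) * dist (φ v) y ^ 2 ≤
      (1 / lam) * ((1 / 2) * ∑ u, ∑ v, if G.Adj u v then dist (φ u) (φ v) ^ 2 else 0)) :
    2 * ∑ v, dist (φ v) y ^ 2 ≤ Fintype.card V * (d * C ^ 2 / lam) := by
  have hdeg_weight : ∑ v, dist (φ v) y ^ 2 ≤ ∑ v, (G.degree v : ℝ) * dist (φ v) y ^ 2 :=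
    sum_le_sum fun v _ => le_mul_of_one_le_left (sq_nonneg _) (by exact_mod_cast hdeg1 v)
  have henergy := sum_adj_dist_sq_le G φ hdeg hC
  calc 2 * ∑ v, dist (φ v) y ^ 2
      ≤ (1 / lam) * ∑ u, ∑ v, (if G.Adj u v then dist (φ u) (φ v) ^ 2 else 0) := by linarith
    _ ≤ (1 / lam) * (Fintype.card V * (d * C ^ 2)) := by gcongr
    _ = Fintype.card V * (d * C ^ 2 / lam) := by ring

lemma card_filter_dist_le_le_pow_ceil (hconn : G.Connected) (hdeg : ∀ v, G.degree v ≤ d)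
    {ρ : ℝ → ℝ} (hρ : MonotoneOn ρ (Set.Ici 0))
    (hlow : ∀ x x', ρ (G.dist x x') ≤ dist (φ x) (φ x')) {R t : ℝ} (ht : 0 ≤ t)
    (hRt : 2 * R < ρ t) (y : Y) :
    #{v | dist (φ v) y ≤ R} ≤ (d + 1) ^ ⌈t⌉₊ := by
  obtain hempty | ⟨x, hx⟩ := (filter (fun v => dist (φ v) y ≤ R) univ).eq_empty_or_nonempty
  · simp [hempty]
  refine (card_le_card fun v hv => ?_).trans (hconn.card_filter_dist_le_le_pow hdeg x ⌈t⌉₊)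
  simp only [mem_filter, mem_univ, true_and] at hx hv ⊢
  have hclose : ρ (G.dist x v) < ρ t :=
    calc ρ (G.dist x v) ≤ dist (φ x) (φ v) := hlow x v
      _ ≤ 2 * R := by linarith [dist_triangle_right (φ x) (φ v) y]
      _ < ρ t := hRt
  have hlt : (G.dist x v : ℝ) < t := hρ.reflect_lt (Set.mem_Ici.2 (Nat.cast_nonneg _)) ht hclose
  exact_mod_cast hlt.le.trans (Nat.le_ceil t)

end CoarseEmbedding

theorem liminf_wang_lamOne_eq_zero_general (V : ℕ → Type) [∀ n, Fintype (V n)]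
    (G : ∀ n, SimpleGraph (V n)) [∀ n, DecidableRel (G n).Adj]
    (hconn : ∀ n, (G n).Connected)
    (d : ℕ) (hdeg : ∀ n v, (G n).degree v ≤ d) (hdeg1 : ∀ n v, 1 ≤ (G n).degree v)
    (hcard : Tendsto (fun n => Fintype.card (V n)) atTop atTop)
    {Y : Type*} [MetricSpace Y] (f : ∀ n, V n → Y)
    (ρ₁ ρ₂ : ℝ → ℝ)
    (h1mono : MonotoneOn ρ₁ (Set.Ici 0))
    (h1unb : ∀ M : ℝ, ∃ t : ℝ, 0 ≤ t ∧ M < ρ₁ t)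
    (hemb : ∀ n (x x' : V n),
      ρ₁ ((G n).dist x x' : ℝ) ≤ dist (f n x) (f n x') ∧
        dist (f n x) (f n x') ≤ ρ₂ ((G n).dist x x' : ℝ))
    (lam : ℕ → ℝ) (hlam0 : ∀ n, 0 ≤ lam n)
    (hbary : ∀ n, 0 < lam n → ∃ ybar : Y,
      ∑ v : V n, ((G n).degree v : ℝ) * dist (f n v) ybar ^ 2 ≤
        (1 / lam n) *
          ((1 / 2) * ∑ u : V n, ∑ v : V n,
            if (G n).Adj u v then dist (f n u) (f n v) ^ 2 else 0)) :
    liminf (fun n => lam n) atTop = 0 := by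
  have hedge n (u v : V n) (huv : (G n).Adj u v) : dist (f n u) (f n v) ≤ ρ₂ 1 := by
    simpa [SimpleGraph.dist_eq_one_iff_adj.2 huv] using (hemb n u v).2
  refine (tendsto_order.2 ⟨fun a ha => .of_forall fun n => ha.trans_le (hlam0 n),
    fun c hc => ?_⟩).liminf_eq
  -- the `+ 1` keeps the Markov threshold positive when `ρ₂ 1 = 0`
  set a := d * ρ₂ 1 ^ 2 / c + 1
  have ha : 0 < a := by positivity
  obtain ⟨t, ht, hρt⟩ := h1unb (2 * √a)
  filter_upwards [hcard.eventually_gt_atTop (2 * (d + 1) ^ ⌈t⌉₊)] with n hn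
  by_contra! hcn
  obtain ⟨y, hy⟩ := hbary n (hc.trans_le hcn)
  have hsum : 2 * ∑ v, dist (f n v) y ^ 2 ≤ Fintype.card (V n) * a := by
    refine (two_mul_sum_dist_sq_le_of_barycenter (G n) (f n) (hdeg n) (hdeg1 n) (hedge n)
      (hc.trans_le hcn) hy).trans ?_
    gcongr
    exact (div_le_div_of_nonneg_left (by positivity) hc hcn).trans
      (le_add_of_nonneg_right zero_le_one)
  have hhalf := card_le_two_mul_card_filter_le (fun v => sq_nonneg (dist (f n v) y)) ha hsum
  have hball := card_filter_dist_le_le_pow_ceil (G n) (f n) (hconn n) (hdeg n) h1mono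
    (fun x x' => (hemb n x x').1) ht hρt y
  simp_rw [← Real.le_sqrt dist_nonneg ha.le] at hhalf
  omega

/-- if a sequence of finite connected graphs with `|V_n| → ∞` and degrees in
`[1,d]` embeds uniformly into a metric space `Y`, and `lam n` (standing for Wang's
invariant `λ₁(G_n,Y)`) is nonnegative and satisfies the barycenter inequality for the
embedding maps, then `liminf_n λ₁(G_n,Y) = 0`. -/
theorem liminf_wang_lamOne_eq_zero (V : ℕ → Type) [∀ n, Fintype (V n)]
    (G : ∀ n, SimpleGraph (V n)) [∀ n, DecidableRel (G n).Adj]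
    (hconn : ∀ n, (G n).Connected)
    (d : ℕ) (hdeg : ∀ n v, (G n).degree v ≤ d) (hdeg1 : ∀ n v, 1 ≤ (G n).degree v)
    (hcard : Tendsto (fun n => Fintype.card (V n)) atTop atTop)
    {Y : Type*} [MetricSpace Y] (f : ∀ n, V n → Y)
    (ρ₁ ρ₂ : ℝ → ℝ)
    (h1mono : MonotoneOn ρ₁ (Set.Ici 0)) (h2mono : MonotoneOn ρ₂ (Set.Ici 0))
    (h1unb : ∀ M : ℝ, ∃ t : ℝ, 0 ≤ t ∧ M < ρ₁ t)
    (h2unb : ∀ M : ℝ, ∃ t : ℝ, 0 ≤ t ∧ M < ρ₂ t)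
    (hemb : ∀ n (x x' : V n),
      ρ₁ ((G n).dist x x' : ℝ) ≤ dist (f n x) (f n x') ∧
        dist (f n x) (f n x') ≤ ρ₂ ((G n).dist x x' : ℝ))
    (lam : ℕ → ℝ) (hlam0 : ∀ n, 0 ≤ lam n)
    (hbary : ∀ n, 0 < lam n → ∃ ybar : Y,
      ∑ v : V n, ((G n).degree v : ℝ) * dist (f n v) ybar ^ 2 ≤
        (1 / lam n) *
          ((1 / 2) * ∑ u : V n, ∑ v : V n,
            if (G n).Adj u v then dist (f n u) (f n v) ^ 2 else 0)) :
    liminf (fun n => lam n) atTop = 0 :=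
  liminf_wang_lamOne_eq_zero_general V G hconn d hdeg hdeg1 hcard f ρ₁ ρ₂ h1mono h1unb hemb lam
    hlam0 hbary
end

section
/- Let Y be a metric space and T a metric space with basepoint O_T such that there is a map f : T → H to a Hilbert space with ‖f(v)‖ = d(O_T, v) and d(v,w)/D ≤ ‖f(v) − f(w)‖ ≤ d(v,w) for all v,w ∈ T, where D ≥ 1. Then for every finitely supported probability measure μ on T with barycenter O_T (i.e., O_T minimizes q ↦ ∑ wᵢ d(q,pᵢ)² and T is complete CAT(0)), δ(μ) ≤ 1 − 1/D². In particular, if D ≤ √2, then δ(μ) ≤ 1/2. -/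
/-!
Let `V = ∑ wᵢ d(O, pᵢ)²`. Since `O` minimises the Fréchet functional `F q = ∑ wᵢ d(q, pᵢ)²`,
the CAT(0) midpoint inequality upgrades minimality to quadratic growth `d(O, q)² ≤ F q - F O`;
averaging this over `q = pⱼ` gives `∑∑ wᵢwⱼ d(pᵢ, pⱼ)² ≥ 2V`. The lower distortion bound moves
this to the images `f pᵢ`, and the variance identity in the Hilbert space turns it into
`‖∑ wᵢ f pᵢ‖² ≤ V - V / D²`, where `V = ∑ wᵢ ‖f pᵢ‖²` because `f` is radial.
-/

open Finset

section WeightedSums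

variable {ι : Type*} [Fintype ι] {w : ι → ℝ}

lemma sum_sum_mul_mul_eq_sum (hw1 : ∑ i, w i = 1) (a : ι → ℝ) :
    ∑ i, ∑ j, w i * w j * a i = ∑ i, w i * a i := by
  rw [← one_mul (∑ i, w i * a i), ← hw1, sum_mul_sum, sum_comm]
  exact sum_congr rfl fun i _ => sum_congr rfl fun j _ => by ring

theorem norm_sum_smul_sq_eq {H : Type*} [NormedAddCommGroup H] [InnerProductSpace ℝ H]
    (hw1 : ∑ i, w i = 1) (x : ι → H) :
    ‖∑ i, w i • x i‖ ^ 2 =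
      ∑ i, w i * ‖x i‖ ^ 2 - (1 / 2) * ∑ i, ∑ j, w i * w j * ‖x i - x j‖ ^ 2 := by
  have hinner : ‖∑ i, w i • x i‖ ^ 2 = ∑ i, ∑ j, w i * w j * inner ℝ (x i) (x j) := by
    simp only [← real_inner_self_eq_norm_sq, sum_inner, inner_sum, real_inner_smul_left,
      real_inner_smul_right, mul_assoc]
    rw [sum_comm]
    exact sum_congr rfl fun i _ => sum_congr rfl fun j _ => by ring
  have hright : ∑ i, ∑ j, w i * w j * ‖x j‖ ^ 2 = ∑ i, w i * ‖x i‖ ^ 2 := by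
    rw [sum_comm, ← sum_sum_mul_mul_eq_sum hw1]
    exact sum_congr rfl fun i _ => sum_congr rfl fun j _ => by ring
  have hspread : ∑ i, ∑ j, w i * w j * ‖x i - x j‖ ^ 2 =
      2 * ∑ i, w i * ‖x i‖ ^ 2 - 2 * ∑ i, ∑ j, w i * w j * inner ℝ (x i) (x j) := by
    simp only [norm_sub_sq_real, mul_sub, mul_add, sum_sub_distrib, sum_add_distrib,
      sum_sum_mul_mul_eq_sum hw1, hright, mul_left_comm _ (2 : ℝ), ← mul_sum]
    ring
  rw [hinner, hspread]
  ring

end WeightedSums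

section Barycenter

def HasCAT0Midpoints (T : Type*) [PseudoMetricSpace T] : Prop :=
  ∀ x y : T, ∃ mid : T, dist x mid = dist x y / 2 ∧ dist y mid = dist x y / 2 ∧
    ∀ z : T, dist z mid ^ 2 ≤ (dist z x ^ 2 + dist z y ^ 2) / 2 - dist x y ^ 2 / 4

variable {T : Type*} [PseudoMetricSpace T]

/-- The defect `d(O, r)² - (F r - F O)` at least halves when `r` is replaced by its midpoint
with `O`, while it never exceeds `d(O, r)²`, which drops by a factor `4`; hence it is at most
`d(O, r)² / 2ⁿ` for every `n`. -/
theorem sq_dist_le_sub_of_midpoint_le {F : T → ℝ} {O : T} (hO : ∀ q, F O ≤ F q)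
    (hmid : ∀ r, ∃ m, dist O m = dist O r / 2 ∧ F m ≤ (F O + F r) / 2 - dist O r ^ 2 / 4)
    (r : T) : dist O r ^ 2 ≤ F r - F O := by
  have hdefect (n : ℕ) : ∀ r, dist O r ^ 2 - (F r - F O) ≤ dist O r ^ 2 * (1 / 2) ^ n := by
    induction n with
    | zero => intro r; linarith [hO r]
    | succ n ih =>
      intro r
      obtain ⟨m, hOm, hFm⟩ := hmid r
      have := ih m
      rw [hOm] at this
      rw [pow_succ (1 / 2 : ℝ)]
      linarith
  have hlim : Filter.Tendsto (fun n : ℕ => dist O r ^ 2 * (1 / 2) ^ n) Filter.atTop (nhds 0) := by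
    simpa using (tendsto_pow_atTop_nhds_zero_of_lt_one (by norm_num : (0 : ℝ) ≤ 1 / 2)
      (by norm_num)).const_mul (dist O r ^ 2)
  linarith [ge_of_tendsto' hlim fun n => hdefect n r]

variable {ι : Type*} [Fintype ι] {w : ι → ℝ} {p : ι → T}

def frechetFunctional (w : ι → ℝ) (p : ι → T) (q : T) : ℝ :=
  ∑ i, w i * dist q (p i) ^ 2

lemma frechetFunctional_le_of_midpoint (hw : ∀ i, 0 ≤ w i) (hw1 : ∑ i, w i = 1) {x y m : T}
    (hm : ∀ z, dist z m ^ 2 ≤ (dist z x ^ 2 + dist z y ^ 2) / 2 - dist x y ^ 2 / 4) :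
    frechetFunctional w p m ≤
      (frechetFunctional w p x + frechetFunctional w p y) / 2 - dist x y ^ 2 / 4 := by
  calc frechetFunctional w p m
      ≤ ∑ i, w i * ((dist x (p i) ^ 2 + dist y (p i) ^ 2) / 2 - dist x y ^ 2 / 4) :=
        sum_le_sum fun i _ => mul_le_mul_of_nonneg_left
          (by simpa only [dist_comm (p i)] using hm (p i)) (hw i)
    _ = _ := by
        simp only [frechetFunctional, mul_sub, sum_sub_distrib, ← sum_mul, hw1, mul_add,
          sum_add_distrib, mul_div_assoc', ← sum_div]
        ring

theorem sq_dist_le_frechetFunctional_sub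
    (hcat : HasCAT0Midpoints T) (hw : ∀ i, 0 ≤ w i) (hw1 : ∑ i, w i = 1) {O : T}
    (hbar : ∀ q, frechetFunctional w p O ≤ frechetFunctional w p q) (q : T) :
    dist O q ^ 2 ≤ frechetFunctional w p q - frechetFunctional w p O :=
  sq_dist_le_sub_of_midpoint_le hbar (fun r => by
    obtain ⟨m, hOm, -, hm⟩ := hcat O r
    exact ⟨m, hOm, frechetFunctional_le_of_midpoint hw hw1 hm⟩) q

theorem two_mul_frechetFunctional_le_sum_sum
    (hcat : HasCAT0Midpoints T) (hw : ∀ i, 0 ≤ w i) (hw1 : ∑ i, w i = 1) {O : T}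
    (hbar : ∀ q, frechetFunctional w p O ≤ frechetFunctional w p q) :
    2 * frechetFunctional w p O ≤ ∑ i, ∑ j, w i * w j * dist (p i) (p j) ^ 2 := by
  have h : frechetFunctional w p O ≤
      ∑ j, w j * (frechetFunctional w p (p j) - frechetFunctional w p O) :=
    sum_le_sum fun j _ => mul_le_mul_of_nonneg_left
      (sq_dist_le_frechetFunctional_sub hcat hw hw1 hbar (p j)) (hw j)
  have hsum : ∑ j, w j * (frechetFunctional w p (p j) - frechetFunctional w p O) =
      ∑ i, ∑ j, w i * w j * dist (p i) (p j) ^ 2 - frechetFunctional w p O := by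
    simp only [mul_sub, sum_sub_distrib, ← sum_mul, hw1, one_mul]
    simp only [frechetFunctional, mul_sum, mul_assoc]
  linarith

end Barycenter

theorem delta_le_of_radial_distortion_general {T : Type*} [MetricSpace T]
    (hcat : ∀ x y : T, ∃ mid : T, dist x mid = dist x y / 2 ∧ dist y mid = dist x y / 2 ∧
      ∀ z : T, dist z mid ^ 2 ≤ (dist z x ^ 2 + dist z y ^ 2) / 2 - dist x y ^ 2 / 4)
    (O : T)
    {H : Type*} [NormedAddCommGroup H] [InnerProductSpace ℝ H]
    (f : T → H) (D : ℝ) (hD : 1 ≤ D)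
    (hrad : ∀ v : T, ‖f v‖ = dist O v)
    (hlow : ∀ v w : T, dist v w / D ≤ ‖f v - f w‖)
    (m : ℕ) (w : Fin m → ℝ) (p : Fin m → T)
    (hw : ∀ i, 0 ≤ w i) (hw1 : ∑ i, w i = 1)
    (hbar : ∀ q : T, ∑ i, w i * dist O (p i) ^ 2 ≤ ∑ i, w i * dist q (p i) ^ 2) :
    ‖∑ i, w i • f (p i)‖ ^ 2 ≤ (1 - 1 / D ^ 2) * ∑ i, w i * ‖f (p i)‖ ^ 2 ∧
      (D ≤ Real.sqrt 2 →
        ‖∑ i, w i • f (p i)‖ ^ 2 ≤ (1 / 2) * ∑ i, w i * ‖f (p i)‖ ^ 2) := by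
  have hD0 : 0 < D := zero_lt_one.trans_le hD
  have hV : ∑ i, w i * ‖f (p i)‖ ^ 2 = frechetFunctional w p O := by
    simp only [hrad, frechetFunctional]
  have hpair (i j : Fin m) : dist (p i) (p j) ^ 2 / D ^ 2 ≤ ‖f (p i) - f (p j)‖ ^ 2 := by
    rw [← div_pow]
    exact pow_le_pow_left₀ (by positivity) (hlow _ _) 2
  have hspread : 2 * frechetFunctional w p O / D ^ 2 ≤
      ∑ i, ∑ j, w i * w j * ‖f (p i) - f (p j)‖ ^ 2 := calc
    _ ≤ (∑ i, ∑ j, w i * w j * dist (p i) (p j) ^ 2) / D ^ 2 := by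
      gcongr
      exact two_mul_frechetFunctional_le_sum_sum hcat hw hw1 hbar
    _ = ∑ i, ∑ j, w i * w j * (dist (p i) (p j) ^ 2 / D ^ 2) := by
      simp only [sum_div, mul_div_assoc]
    _ ≤ _ := sum_le_sum fun i _ => sum_le_sum fun j _ =>
      mul_le_mul_of_nonneg_left (hpair i j) (mul_nonneg (hw i) (hw j))
  have hmain : ‖∑ i, w i • f (p i)‖ ^ 2 ≤ (1 - 1 / D ^ 2) * ∑ i, w i * ‖f (p i)‖ ^ 2 := by
    rw [norm_sum_smul_sq_eq hw1, hV]
    have : (1 - 1 / D ^ 2) * frechetFunctional w p O =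
        frechetFunctional w p O - 1 / 2 * (2 * frechetFunctional w p O / D ^ 2) := by ring
    linarith
  refine ⟨hmain, fun hDle => hmain.trans (mul_le_mul_of_nonneg_right ?_ ?_)⟩
  · have : 1 / 2 ≤ 1 / D ^ 2 :=
      one_div_le_one_div_of_le (by positivity) ((Real.le_sqrt' hD0).mp hDle)
    linarith
  · exact sum_nonneg fun i _ => mul_nonneg (hw i) (sq_nonneg _)

/-- if `T` is a complete CAT(0) space (midpoint comparison formulation)
with basepoint `O` admitting a radial map `f` to a Hilbert space with distortion
`D ≥ 1`, then every finitely supported probability measure `μ = ∑ wᵢ Dirac_{pᵢ}` with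
barycenter `O` satisfies `δ(μ) ≤ 1 − 1/D²`, witnessed by `f`; in particular if
`D ≤ √2` then `δ(μ) ≤ 1/2`. -/
theorem delta_le_of_radial_distortion {T : Type*} [MetricSpace T] [CompleteSpace T]
    (hcat : ∀ x y : T, ∃ mid : T, dist x mid = dist x y / 2 ∧ dist y mid = dist x y / 2 ∧
      ∀ z : T, dist z mid ^ 2 ≤ (dist z x ^ 2 + dist z y ^ 2) / 2 - dist x y ^ 2 / 4)
    (O : T)
    {H : Type*} [NormedAddCommGroup H] [InnerProductSpace ℝ H] [CompleteSpace H]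
    (f : T → H) (D : ℝ) (hD : 1 ≤ D)
    (hrad : ∀ v : T, ‖f v‖ = dist O v)
    (hlow : ∀ v w : T, dist v w / D ≤ ‖f v - f w‖)
    (hup : ∀ v w : T, ‖f v - f w‖ ≤ dist v w)
    (m : ℕ) (w : Fin m → ℝ) (p : Fin m → T)
    (hw : ∀ i, 0 ≤ w i) (hw1 : ∑ i, w i = 1)
    (hbar : ∀ q : T, ∑ i, w i * dist O (p i) ^ 2 ≤ ∑ i, w i * dist q (p i) ^ 2) :
    ‖∑ i, w i • f (p i)‖ ^ 2 ≤ (1 - 1 / D ^ 2) * ∑ i, w i * ‖f (p i)‖ ^ 2 ∧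
      (D ≤ Real.sqrt 2 →
        ‖∑ i, w i • f (p i)‖ ^ 2 ≤ (1 / 2) * ∑ i, w i * ‖f (p i)‖ ^ 2) :=
  delta_le_of_radial_distortion_general hcat O f D hD hrad hlow m w p hw hw1 hbar
end
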